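/- For any LTL-style formulas ψ (depending on a parameter x from a nonempty domain D) and φ (not depending on x), the formula '(∃x. ψ) Release φ' is semantically equivalent to '∃x. (ψ Release φ)'. Here Release is defined as the dual of Until: σ ⊨ α R β iff ¬(σ ⊨ (¬α) U (¬β)), i.e., for all j, either β holds at the j-th suffix or there exists k < j where α holds at the k-th suffix. -/

import Mathlib

/-!
If `φ` holds at every suffix, any `d` works. Otherwise, at the first suffix where `φ` fails,
some witness `d` of `∃x. ψ` occurs strictly earlier; `φ` holds before that suffix, and this
single `d` serves every later one.
-/

/-- Suffix of a trace. -/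
def shift {S : Type*} (σ : ℕ → S) (n : ℕ) : ℕ → S := fun k => σ (n + k)

theorem exists_forall_or_lt_of_forall_or_exists_lt {p r : ℕ → Prop}
    (h : ∀ j, p j ∨ ∃ k < j, r k) (hp : ∃ j, ¬ p j) :
    ∃ k, r k ∧ ∀ j, p j ∨ k < j := by
  classical
  obtain hfirst | ⟨k, hk, hr⟩ := h (Nat.find hp)
  · exact absurd hfirst (Nat.find_spec hp)
  · exact ⟨k, hr, fun j => or_iff_not_imp_left.2 fun hpj => hk.trans_le (Nat.find_min' hp hpj)⟩

theorem forall_or_exists_lt_exists_iff {D : Type*} [Nonempty D] {p : ℕ → Prop}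
    {q : D → ℕ → Prop} :
    (∀ j, p j ∨ ∃ k < j, ∃ d, q d k) ↔ ∃ d, ∀ j, p j ∨ ∃ k < j, q d k := by
  refine ⟨fun h => ?_, fun ⟨d, h⟩ j =>
    (h j).imp_right fun ⟨k, hk, hq⟩ => ⟨k, hk, d, hq⟩⟩
  by_cases hp : ∀ j, p j
  · exact ⟨Classical.arbitrary D, fun j => .inl (hp j)⟩
  · obtain ⟨k, ⟨d, hd⟩, hk⟩ :=
      exists_forall_or_lt_of_forall_or_exists_lt h (not_forall.1 hp)
    exact ⟨d, fun j => (hk j).imp_right fun hkj => ⟨k, hkj, hd⟩⟩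

/-- Release commutes with existential quantification in its first argument:
    `(∃x. ψ) R φ ≡ ∃x. (ψ R φ)`. -/
theorem release_exists_comm {S D : Type*} [Nonempty D]
    (ψ : D → (ℕ → S) → Prop) (φ : (ℕ → S) → Prop) (σ : ℕ → S) :
    (∀ j, φ (shift σ j) ∨ ∃ k < j, ∃ d : D, ψ d (shift σ k)) ↔
      (∃ d : D, ∀ j, φ (shift σ j) ∨ ∃ k < j, ψ d (shift σ k)) :=
  forall_or_exists_lt_exists_iff
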